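/- arXiv:math/9902038 — 3 statements merged into one kernel-verified Lean document; each statement's English description precedes it below -/
import Mathlib

section
/- Let π : M → N be a C^1-smooth (or Lipschitz) map between finite-dimensional real normed spaces with dim N = e, and let E ⊆ M be a set with H^s(E) = 0 for some s ≥ e. Then for Lebesgue-almost all y ∈ N, the fiber slice satisfies H^{s-e}(E ∩ π^{-1}(y)) = 0. -/
/-!
Cover `E` by sets `U i` of small diameter with `∑ diam (U i) ^ s` small. The slice over `y` is
covered by those `U i` whose projection contains `y`, so `μH[s - e]` of the slice is at most
`∑ diam (U i) ^ (s - e) * 1_{π (U i)} (y)`. Since `vol (π (U i)) ≤ (K diam (U i)) ^ e`, the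
integral of this function of `y` is at most `K ^ e ∑ diam (U i) ^ s`, which can be made
arbitrarily small; Fatou's lemma then forces the slices to be null almost everywhere.
-/

open MeasureTheory Filter Set Metric
open scoped ENNReal NNReal Topology

namespace MeasureTheory

theorem ae_liminf_eq_zero_of_tendsto_lintegral {α : Type*} [MeasurableSpace α] {μ : Measure α}
    {f : ℕ → α → ℝ≥0∞} (hf : ∀ n, Measurable (f n))
    (h : Tendsto (fun n => ∫⁻ a, f n a ∂μ) atTop (𝓝 0)) :
    ∀ᵐ a ∂μ, liminf (fun n => f n a) atTop = 0 := by
  have hfatou : ∫⁻ a, liminf (fun n => f n a) atTop ∂μ = 0 :=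
    nonpos_iff_eq_zero.1 ((lintegral_liminf_le hf).trans h.liminf_eq.le)
  exact (lintegral_eq_zero_iff (Measurable.liminf hf)).1 hfatou

variable {X Y : Type*} [EMetricSpace X]

theorem exists_cover_tsum_ediam_rpow_lt_of_hausdorffMeasure_eq_zero [MeasurableSpace X]
    [BorelSpace X] {s : ℝ} (hs : 0 < s) {E : Set X} (hE : μH[s] E = 0) {r ε : ℝ≥0∞}
    (hr : 0 < r) (hε : 0 < ε) :
    ∃ U : ℕ → Set X, E ⊆ ⋃ i, U i ∧ (∀ i, ediam (U i) ≤ r) ∧ ∑' i, ediam (U i) ^ s < ε := by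
  have hcovers : (⨅ (U : ℕ → Set X) (_ : E ⊆ ⋃ i, U i) (_ : ∀ i, ediam (U i) ≤ r),
      ∑' i, ⨆ _ : (U i).Nonempty, ediam (U i) ^ s) < ε := by
    refine lt_of_le_of_lt ?_ hε
    rw [← hE, Measure.hausdorffMeasure_apply]
    exact le_iSup₂ (f := fun r (_ : 0 < r) => ⨅ (U : ℕ → Set X) (_ : E ⊆ ⋃ i, U i)
      (_ : ∀ i, ediam (U i) ≤ r), ∑' i, ⨆ _ : (U i).Nonempty, ediam (U i) ^ s) r hr
  simp only [iInf_lt_iff] at hcovers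
  obtain ⟨U, hcover, hdiam, hsum⟩ := hcovers
  refine ⟨U, hcover, hdiam, (ENNReal.tsum_le_tsum fun i => ?_).trans_lt hsum⟩
  rcases (U i).eq_empty_or_nonempty with hempty | hne
  · simp [hempty, ENNReal.zero_rpow_of_pos hs]
  · exact le_iSup_of_le hne le_rfl

/-- Taking the closure makes this measurable in `y`. -/
noncomputable def sliceCoverSum [TopologicalSpace Y] (π : X → Y) (t : ℝ) (U : ℕ → Set X)
    (y : Y) : ℝ≥0∞ :=
  ∑' i, (closure (π '' U i)).indicator (fun _ => ediam (U i) ^ t) y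

theorem hausdorffMeasure_inter_preimage_le_liminf_sliceCoverSum [MeasurableSpace X]
    [BorelSpace X] [TopologicalSpace Y] {ι : Type*} {l : Filter ι} (π : X → Y) {t : ℝ}
    (ht : 0 ≤ t) {E : Set X} {U : ι → ℕ → Set X} {r : ι → ℝ≥0∞} (hr : Tendsto r l (𝓝 0))
    (hdiam : ∀ n i, ediam (U n i) ≤ r n) (hcover : ∀ n, E ⊆ ⋃ i, U n i) (y : Y) :
    μH[t] (E ∩ π ⁻¹' {y}) ≤ liminf (fun n => sliceCoverSum π t (U n) y) l := by
  let hits (n : ι) : Set ℕ := {i | y ∈ closure (π '' U n i)}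
  have hslice_cover (n : ι) : E ∩ π ⁻¹' {y} ⊆ ⋃ i : hits n, U n i ∩ π ⁻¹' {y} := by
    rintro x ⟨hxE, hxy⟩
    obtain ⟨i, hxU⟩ := mem_iUnion.1 (hcover n hxE)
    exact mem_iUnion.2 ⟨⟨i, subset_closure ⟨x, hxU, hxy⟩⟩, hxU, hxy⟩
  refine (Measure.hausdorffMeasure_le_liminf_tsum t _ r hr
    (fun n (i : hits n) => U n i ∩ π ⁻¹' {y})
    (Eventually.of_forall fun n i => (ediam_mono inter_subset_left).trans (hdiam n i))
    (Eventually.of_forall hslice_cover)).trans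
    (liminf_le_liminf (Eventually.of_forall fun n => ?_))
  calc ∑' i : hits n, ediam (U n i ∩ π ⁻¹' {y}) ^ t
      ≤ ∑' i : hits n, ediam (U n i) ^ t :=
        ENNReal.tsum_le_tsum fun i => ENNReal.rpow_le_rpow (ediam_mono inter_subset_left) ht
    _ = sliceCoverSum π t (U n) y := tsum_subtype (hits n) (fun i => ediam (U n i) ^ t)

theorem measurable_sliceCoverSum [TopologicalSpace Y] [MeasurableSpace Y]
    [OpensMeasurableSpace Y] (π : X → Y) (t : ℝ) (U : ℕ → Set X) :
    Measurable (sliceCoverSum π t U) :=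
  .tsum fun _ => measurable_const.indicator isClosed_closure.measurableSet

theorem lintegral_sliceCoverSum [TopologicalSpace Y] [MeasurableSpace Y]
    [OpensMeasurableSpace Y] (μ : Measure Y) (π : X → Y) (t : ℝ) (U : ℕ → Set X) :
    ∫⁻ y, sliceCoverSum π t U y ∂μ = ∑' i, ediam (U i) ^ t * μ (closure (π '' U i)) := by
  simp only [sliceCoverSum]
  rw [lintegral_tsum fun i =>
    (measurable_const.indicator isClosed_closure.measurableSet).aemeasurable]
  exact tsum_congr fun i => lintegral_indicator_const isClosed_closure.measurableSet _

theorem lintegral_sliceCoverSum_le [PseudoEMetricSpace Y] [MeasurableSpace Y]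
    [OpensMeasurableSpace Y] {μ : Measure Y} {C : ℝ≥0∞} {e : ℝ} (he : 0 ≤ e)
    (hμ : ∀ A, μ A ≤ C * ediam A ^ e) {K : ℝ≥0} {π : X → Y} (hπ : LipschitzWith K π) {t : ℝ}
    (ht : 0 ≤ t) (U : ℕ → Set X) :
    ∫⁻ y, sliceCoverSum π t U y ∂μ ≤ C * K ^ e * ∑' i, ediam (U i) ^ (t + e) := by
  rw [lintegral_sliceCoverSum, ← ENNReal.tsum_mul_left]
  refine ENNReal.tsum_le_tsum fun i => ?_
  have himage : μ (closure (π '' U i)) ≤ C * (K * ediam (U i)) ^ e := by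
    calc μ (closure (π '' U i)) ≤ C * ediam (π '' U i) ^ e := by
          simpa only [ediam_closure] using hμ (closure (π '' U i))
      _ ≤ C * (K * ediam (U i)) ^ e := by gcongr; exact hπ.ediam_image_le _
  calc ediam (U i) ^ t * μ (closure (π '' U i))
      ≤ ediam (U i) ^ t * (C * (K * ediam (U i)) ^ e) := by gcongr
    _ = C * K ^ e * ediam (U i) ^ (t + e) := by
      rw [ENNReal.mul_rpow_of_nonneg _ _ he, ENNReal.rpow_add_of_nonneg _ _ ht he]
      ring

theorem ae_hausdorffMeasure_inter_preimage_eq_zero [MeasurableSpace X] [BorelSpace X]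
    [PseudoEMetricSpace Y] [MeasurableSpace Y] [OpensMeasurableSpace Y] {μ : Measure Y}
    {C : ℝ≥0∞} (hC : C ≠ ∞) {e : ℝ} (he : 0 ≤ e) (hμ : ∀ A, μ A ≤ C * ediam A ^ e) {K : ℝ≥0}
    {π : X → Y} (hπ : LipschitzWith K π) {E : Set X} {s : ℝ} (hs : 0 < s) (hes : e ≤ s)
    (hE : μH[s] E = 0) :
    ∀ᵐ y ∂μ, μH[s - e] (E ∩ π ⁻¹' {y}) = 0 := by
  choose U hcover hdiam hsum using fun n : ℕ =>
    exists_cover_tsum_ediam_rpow_lt_of_hausdorffMeasure_eq_zero hs hE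
      (ENNReal.inv_pos.2 (ENNReal.natCast_ne_top n))
      (ENNReal.pow_pos (by norm_num : (0 : ℝ≥0∞) < 2⁻¹) n)
  have ht : 0 ≤ s - e := sub_nonneg.2 hes
  have hbound (n : ℕ) : ∫⁻ y, sliceCoverSum π (s - e) (U n) y ∂μ ≤ C * K ^ e * 2⁻¹ ^ n := by
    calc _ ≤ C * K ^ e * ∑' i, ediam (U n i) ^ (s - e + e) :=
          lintegral_sliceCoverSum_le he hμ hπ ht _
      _ ≤ C * K ^ e * 2⁻¹ ^ n := by rw [sub_add_cancel]; gcongr; exact (hsum n).le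
  have hgeom : Tendsto (fun n : ℕ => C * K ^ e * (2⁻¹ : ℝ≥0∞) ^ n) atTop (𝓝 0) := by
    simpa using ENNReal.Tendsto.const_mul
      (ENNReal.tendsto_pow_atTop_nhds_zero_of_lt_one (by norm_num : (2⁻¹ : ℝ≥0∞) < 1))
      (Or.inr (ENNReal.mul_ne_top hC (ENNReal.rpow_ne_top_of_nonneg he ENNReal.coe_ne_top)))
  have hliminf := ae_liminf_eq_zero_of_tendsto_lintegral
    (fun n => measurable_sliceCoverSum π (s - e) (U n))
    (tendsto_of_tendsto_of_tendsto_of_le_of_le tendsto_const_nhds hgeom (fun _ => zero_le)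
      hbound)
  filter_upwards [hliminf] with y hy
  refine nonpos_iff_eq_zero.1 (le_of_le_of_eq ?_ hy)
  exact hausdorffMeasure_inter_preimage_le_liminf_sliceCoverSum π ht
    ENNReal.tendsto_inv_nat_nhds_zero hdiam hcover y

end MeasureTheory

/-- Slicing of Hausdorff-null sets: if `π : ℝ^d → ℝ^e` is Lipschitz and
`H^s(E) = 0` for some `s ≥ e`, then for Lebesgue-almost every `y ∈ ℝ^e`
the slice `E ∩ π⁻¹{y}` satisfies `H^{s-e}(E ∩ π⁻¹{y}) = 0`. -/
theorem hausdorff_null_slicing (d e : ℕ) (K : NNReal)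
    (π : (Fin d → ℝ) → (Fin e → ℝ)) (hπ : LipschitzWith K π)
    (E : Set (Fin d → ℝ)) (s : ℝ) (hse : (e : ℝ) ≤ s) (hE : μH[s] E = 0) :
    ∀ᵐ y ∂(volume : Measure (Fin e → ℝ)), μH[s - e] (E ∩ π ⁻¹' {y}) = 0 := by
  rcases Nat.eq_zero_or_pos e with rfl | he
  · refine Eventually.of_forall fun y => measure_mono_null inter_subset_left ?_
    simpa using hE
  have hvolume (A : Set (Fin e → ℝ)) : volume A ≤ 1 * ediam A ^ (e : ℝ) := by
    simpa using Real.volume_pi_le_diam_pow A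
  exact ae_hausdorffMeasure_inter_preimage_eq_zero ENNReal.one_ne_top (Nat.cast_nonneg e) hvolume
    hπ ((Nat.cast_pos.2 he).trans_le hse) hse hE
end

section
/- Let M be a connected C^1 manifold (or, as a tractable special case, a connected open subset of R^d with d ≥ 2) and let E ⊆ M be a closed set with H^{d-1}(E) = 0, where d = dim M. Then M \ E is connected (indeed locally connected: every point has a neighborhood basis U with U \ E connected). -/
/-!
For `p ∉ E`, the points `w` whose segment `[p, w]` meets `E` form a Lebesgue-null set: they lie in
the image of `E × ℝ` under the smooth map `(e, t) ↦ p + t • (e - p)`, and `μH[d] (E × ℝ) = 0`,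
as one sees by cutting each `E × [-n, n]` into boxes built on a fine cover of `E`. So two points
`a, b` of a ball outside `E` are joined through a point `w` of the ball whose segments to `a` and
`b` avoid `E`. Since `E` is also nowhere dense, connectedness of `Ω` then passes to `Ω \ E` through
these balls.
-/

open MeasureTheory Set Filter Topology ENNReal Metric Module

theorem IsPreconnected.of_subset_closure_of_locally {X : Type*} [TopologicalSpace X]
    {S U : Set X} (hS : IsPreconnected S) (hUS : U ⊆ S) (hSU : S ⊆ closure U)
    (hloc : ∀ x ∈ S, ∃ V, IsOpen V ∧ x ∈ V ∧ IsPreconnected (V ∩ U)) :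
    IsPreconnected U := by
  rw [isPreconnected_iff_subset_of_disjoint]
  intro u v hu hv hUuv huv
  -- the points near which `U` lies in `u`, resp. in `v`
  let u' := ⋃₀ {W | IsOpen W ∧ W ∩ U ⊆ u}
  let v' := ⋃₀ {W | IsOpen W ∧ W ∩ U ⊆ v}
  have hSuv' : S ⊆ u' ∪ v' := by
    intro x hx
    obtain ⟨V, hVo, hxV, hV⟩ := hloc x hx
    rcases isPreconnected_iff_subset_of_disjoint.1 hV u v hu hv
      (inter_subset_right.trans hUuv)
      (subset_empty_iff.1 (huv ▸ inter_subset_inter_left _ inter_subset_right)) with h | h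
    · exact Or.inl ⟨V, ⟨hVo, h⟩, hxV⟩
    · exact Or.inr ⟨V, ⟨hVo, h⟩, hxV⟩
  have hSuv'_disj : S ∩ (u' ∩ v') = ∅ := by
    refine eq_empty_of_forall_notMem
      fun x ⟨hxS, ⟨W, ⟨hWo, hWu⟩, hxW⟩, ⟨W', ⟨hW'o, hW'v⟩, hxW'⟩⟩ => ?_
    obtain ⟨y, ⟨hyW, hyW'⟩, hyU⟩ :=
      mem_closure_iff.1 (hSU hxS) _ (hWo.inter hW'o) ⟨hxW, hxW'⟩
    exact (huv ▸ ⟨hyU, hWu ⟨hyW, hyU⟩, hW'v ⟨hyW', hyU⟩⟩ : y ∈ (∅ : Set X))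
  rcases isPreconnected_iff_subset_of_disjoint.1 hS u' v'
    (isOpen_sUnion fun _ h => h.1) (isOpen_sUnion fun _ h => h.1) hSuv' hSuv'_disj with h | h
  · exact Or.inl fun x hx => by
      obtain ⟨W, ⟨-, hWu⟩, hxW⟩ := h (hUS hx)
      exact hWu ⟨hxW, hx⟩
  · exact Or.inr fun x hx => by
      obtain ⟨W, ⟨-, hWv⟩, hxW⟩ := h (hUS hx)
      exact hWv ⟨hxW, hx⟩

theorem Set.Icc_subset_iUnion_Icc_add_mul {u v ℓ : ℝ} (hℓ : 0 < ℓ) :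
    Icc u v ⊆ ⋃ k : Fin (⌊(v - u) / ℓ⌋₊ + 1), Icc (u + k * ℓ) (u + k * ℓ + ℓ) := by
  intro y ⟨huy, hyv⟩
  have hk : (⌊(y - u) / ℓ⌋₊ : ℝ) * ℓ ≤ y - u :=
    (le_div_iff₀ hℓ).1 (Nat.floor_le (div_nonneg (sub_nonneg.2 huy) hℓ.le))
  have hk' : y - u < (⌊(y - u) / ℓ⌋₊ + 1 : ℝ) * ℓ :=
    (div_lt_iff₀ hℓ).1 (Nat.lt_floor_add_one _)
  refine mem_iUnion.2 ⟨⟨⌊(y - u) / ℓ⌋₊, Nat.lt_succ_of_le (Nat.floor_le_floor ?_)⟩, ?_, ?_⟩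
  · gcongr
  · dsimp only; linarith
  · dsimp only; linarith

theorem ediam_prod_le {X Y : Type*} [PseudoEMetricSpace X] [PseudoEMetricSpace Y]
    (s : Set X) (t : Set Y) : ediam (s ×ˢ t) ≤ max (ediam s) (ediam t) :=
  ediam_le fun p hp q hq => (Prod.edist_eq p q).trans_le <|
    max_le_max (edist_le_ediam_of_mem hp.1 hq.1) (edist_le_ediam_of_mem hp.2 hq.2)

namespace MeasureTheory.Measure

variable {X : Type*} [EMetricSpace X] [MeasurableSpace X] [BorelSpace X]

theorem exists_cover_of_hausdorffMeasure_eq_zero {d : ℝ} (hd : 0 < d) {s : Set X}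
    (hs : μH[d] s = 0) {r : ℝ≥0∞} (hr : 0 < r) :
    ∃ t : ℕ → Set X, s ⊆ ⋃ n, t n ∧ (∀ n, ediam (t n) ≤ r) ∧ ∑' n, ediam (t n) ^ d ≤ r := by
  simp only [hausdorffMeasure_apply, ENNReal.iSup_eq_zero] at hs
  obtain ⟨t, hst, htr, ht⟩ : ∃ t : ℕ → Set X, s ⊆ ⋃ n, t n ∧ (∀ n, ediam (t n) ≤ r) ∧
      ∑' n, ⨆ _ : (t n).Nonempty, ediam (t n) ^ d < r := by
    have := hs r hr ▸ hr
    simpa only [iInf_lt_iff, exists_prop] using this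
  refine ⟨t, hst, htr, le_of_eq_of_le (tsum_congr fun n => ?_) ht.le⟩
  rcases (t n).eq_empty_or_nonempty with h | h
  · simp [h, ENNReal.zero_rpow_of_pos hd]
  · simp [h]

theorem hausdorffMeasure_eq_zero_of_forall_exists_cover {d : ℝ} {s : Set X}
    {C : ℝ≥0∞} (hC : C ≠ ∞)
    (h : ∀ r : ℝ≥0∞, 0 < r → r ≤ 1 → ∃ (ι : Type) (_ : Countable ι) (t : ι → Set X),
      s ⊆ ⋃ i, t i ∧ (∀ i, ediam (t i) ≤ r) ∧ ∑' i, ediam (t i) ^ d ≤ C * r) :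
    μH[d] s = 0 := by
  have hr : Tendsto (fun n : ℕ => ((n : ℝ≥0∞) + 1)⁻¹) atTop (𝓝 0) := by
    simpa using (tendsto_add_atTop_iff_nat 1).2 ENNReal.tendsto_inv_nat_nhds_zero
  choose ι hι t hst htr ht using fun n : ℕ =>
    h ((n : ℝ≥0∞) + 1)⁻¹ (by simp) (ENNReal.inv_le_one.2 le_add_self)
  refine le_antisymm ?_ bot_le
  calc μH[d] s ≤ liminf (fun n => ∑' i, ediam (t n i) ^ d) atTop :=
        hausdorffMeasure_le_liminf_tsum d s _ hr t (.of_forall htr) (.of_forall hst)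
    _ ≤ liminf (fun n : ℕ => C * ((n : ℝ≥0∞) + 1)⁻¹) atTop := liminf_le_liminf (.of_forall ht)
    _ = 0 := by simpa using (ENNReal.Tendsto.const_mul hr (Or.inr hC)).liminf_eq

theorem exists_cover_pos_of_hausdorffMeasure_eq_zero {d : ℝ} (hd : 1 ≤ d) {s : Set X}
    (hs : μH[d] s = 0) {r : ℝ≥0∞} (hr : 0 < r) (hr₁ : r ≤ 1) :
    ∃ (t : ℕ → Set X) (ℓ : ℕ → ℝ≥0∞), s ⊆ ⋃ n, t n ∧
      (∀ n, ediam (t n) ≤ ℓ n ∧ 0 < ℓ n ∧ ℓ n ≤ r) ∧ ∑' n, ℓ n ^ d ≤ 3 * r := by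
  obtain ⟨t, hst, htr, ht⟩ :=
    exists_cover_of_hausdorffMeasure_eq_zero (zero_lt_one.trans_le hd) hs hr
  have hsmall : ∀ n : ℕ, r * 2⁻¹ ^ n ≤ r := fun n =>
    mul_le_of_le_one_right' (pow_le_one₀ (by simp) (by simp))
  -- enlarging the `n`-th set to size at least `r / 2 ^ n` costs at most `2 * r` in total
  refine ⟨t, fun n => max (ediam (t n)) (r * 2⁻¹ ^ n), hst, fun n => ⟨le_max_left _ _,
    lt_max_of_lt_right (ENNReal.mul_pos hr.ne' (by simp)), max_le (htr n) (hsmall n)⟩, ?_⟩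
  have hgeom : ∑' n : ℕ, r * 2⁻¹ ^ n = 2 * r := by
    rw [ENNReal.tsum_mul_left, ENNReal.tsum_geometric, ENNReal.one_sub_inv_two, inv_inv, mul_comm]
  calc ∑' n, max (ediam (t n)) (r * 2⁻¹ ^ n) ^ d
      ≤ ∑' n, (ediam (t n) ^ d + r * 2⁻¹ ^ n) := by
        refine ENNReal.tsum_le_tsum fun n => ?_
        rw [(ENNReal.monotone_rpow_of_nonneg (zero_le_one.trans hd)).map_max]
        refine max_le le_self_add (le_add_left (ENNReal.rpow_le_self_of_le_one ?_ hd))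
        exact (hsmall n).trans hr₁
    _ = ∑' n, ediam (t n) ^ d + 2 * r := by rw [ENNReal.tsum_add, hgeom]
    _ ≤ r + 2 * r := by gcongr
    _ = 3 * r := by ring

theorem exists_cover_prod_Icc_of_hausdorffMeasure_eq_zero {d : ℝ} (hd : 1 ≤ d)
    {s : Set X} (hs : μH[d] s = 0) {u v : ℝ} (huv : u ≤ v) {r : ℝ≥0∞} (hr : 0 < r)
    (hr₁ : r ≤ 1) :
    ∃ (ι : Type) (_ : Countable ι) (T : ι → Set (X × ℝ)), s ×ˢ Icc u v ⊆ ⋃ i, T i ∧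
      (∀ i, ediam (T i) ≤ r) ∧
        ∑' i, ediam (T i) ^ (d + 1) ≤ ENNReal.ofReal (v - u + 1) * 3 * r := by
  obtain ⟨t, ℓ, hst, hℓ, hsum⟩ := exists_cover_pos_of_hausdorffMeasure_eq_zero hd hs hr hr₁
  have hℓ_top (n : ℕ) : ℓ n ≠ ∞ := ne_top_of_le_ne_top one_ne_top ((hℓ n).2.2.trans hr₁)
  set L : ℕ → ℝ := fun n => (ℓ n).toReal
  have hL (n : ℕ) : ENNReal.ofReal (L n) = ℓ n := ofReal_toReal (hℓ_top n)
  have hL_pos (n : ℕ) : 0 < L n := toReal_pos (hℓ n).2.1.ne' (hℓ_top n)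
  set N : ℕ → ℕ := fun n => ⌊(v - u) / L n⌋₊
  -- each `t n ×ˢ Icc u v` is cut into `N n + 1` boxes of size `ℓ n`
  let box : (Σ n, Fin (N n + 1)) → Set (X × ℝ) := fun i =>
    t i.1 ×ˢ Icc (u + i.2 * L i.1) (u + i.2 * L i.1 + L i.1)
  have hbox (i : Σ n, Fin (N n + 1)) : ediam (box i) ≤ ℓ i.1 :=
    (ediam_prod_le _ _).trans <| max_le (hℓ i.1).1 <| by
      rw [Real.ediam_Icc, add_sub_cancel_left, hL]
  have hcount (n : ℕ) : ((N n + 1 : ℕ) : ℝ≥0∞) * ℓ n ≤ ENNReal.ofReal (v - u + 1) := by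
    rw [← hL, ← ofReal_natCast, ← ofReal_mul (by positivity)]
    refine ofReal_le_ofReal ?_
    have hNL : (N n : ℝ) * L n ≤ v - u :=
      (le_div_iff₀ (hL_pos n)).1 (Nat.floor_le (div_nonneg (sub_nonneg.2 huv) (hL_pos n).le))
    have hL₁ : L n ≤ 1 :=
      toReal_le_of_le_ofReal zero_le_one (by simpa using (hℓ n).2.2.trans hr₁)
    push_cast
    linarith
  refine ⟨_, inferInstance, box, ?_, fun i => (hbox i).trans (hℓ i.1).2.2, ?_⟩
  · rintro ⟨x, y⟩ ⟨hx, hy⟩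
    obtain ⟨n, hn⟩ := mem_iUnion.1 (hst hx)
    obtain ⟨k, hk⟩ := mem_iUnion.1 (Icc_subset_iUnion_Icc_add_mul (hL_pos n) hy)
    exact mem_iUnion.2 ⟨⟨n, k⟩, hn, hk⟩
  calc ∑' i, ediam (box i) ^ (d + 1)
      ≤ ∑' n, ∑' _ : Fin (N n + 1), ℓ n ^ (d + 1) := by
        rw [ENNReal.tsum_sigma']
        gcongr with n k
        exact hbox ⟨n, k⟩
    _ = ∑' n, ((N n + 1 : ℕ) : ℝ≥0∞) * ℓ n * ℓ n ^ d := by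
        refine tsum_congr fun n => ?_
        rw [tsum_fintype, Finset.sum_const, Finset.card_univ, Fintype.card_fin, nsmul_eq_mul,
          ENNReal.rpow_add _ _ (hℓ n).2.1.ne' (hℓ_top n), ENNReal.rpow_one, mul_comm (ℓ n ^ d),
          mul_assoc]
    _ ≤ ∑' n, ENNReal.ofReal (v - u + 1) * ℓ n ^ d := by gcongr with n; exact hcount n
    _ ≤ ENNReal.ofReal (v - u + 1) * 3 * r := by
        rw [ENNReal.tsum_mul_left, mul_assoc]
        gcongr

theorem hausdorffMeasure_prod_univ_eq_zero {d : ℝ} (hd : 1 ≤ d) {s : Set X}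
    (hs : μH[d] s = 0) : μH[d + 1] (s ×ˢ (univ : Set ℝ)) = 0 := by
  have hcover : s ×ˢ (univ : Set ℝ) = ⋃ n : ℕ, s ×ˢ Icc (-n : ℝ) n := by
    rw [← prod_iUnion, ← iUnion_closedBall_nat (0 : ℝ)]
    simp only [Real.closedBall_eq_Icc, zero_sub, zero_add]
  rw [hcover]
  refine measure_iUnion_null fun n => hausdorffMeasure_eq_zero_of_forall_exists_cover
    (C := ENNReal.ofReal (n - -n + 1) * 3) (by finiteness) fun r hr hr₁ => ?_
  exact exists_cover_prod_Icc_of_hausdorffMeasure_eq_zero hd hs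
    (neg_le_self n.cast_nonneg) hr hr₁

end MeasureTheory.Measure

theorem LocallyLipschitz.hausdorffMeasure_image_eq_zero {X Y : Type*} [MetricSpace X]
    [MeasurableSpace X] [BorelSpace X] [SigmaCompactSpace X] [MetricSpace Y] [MeasurableSpace Y]
    [BorelSpace Y] {f : X → Y} (hf : LocallyLipschitz f) {d : ℝ} (hd : 0 ≤ d) {s : Set X}
    (hs : μH[d] s = 0) : μH[d] (f '' s) = 0 := by
  rw [← inter_univ s, ← iUnion_compactCovering, inter_iUnion, image_iUnion]
  refine measure_iUnion_null fun n => ?_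
  obtain ⟨K, hK⟩ :=
    hf.locallyLipschitzOn.exists_lipschitzOnWith_of_compact (isCompact_compactCovering X n)
  refine le_antisymm ?_ bot_le
  calc μH[d] (f '' (s ∩ compactCovering X n))
      ≤ (K : ℝ≥0∞) ^ d * μH[d] (s ∩ compactCovering X n) :=
        (hK.mono inter_subset_right).hausdorffMeasure_image_le hd
    _ = 0 := by rw [measure_mono_null inter_subset_left hs, mul_zero]

section FiniteDimensional

variable {V : Type*} [NormedAddCommGroup V] [NormedSpace ℝ V] [FiniteDimensional ℝ V]
  [MeasurableSpace V] [BorelSpace V]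

theorem hausdorffMeasure_segment_inter_nonempty_eq_zero {d : ℝ} (hd : 1 ≤ d) {s : Set V}
    (hs : μH[d] s = 0) {p : V} (hp : p ∉ s) :
    μH[d + 1] {w | (segment ℝ p w ∩ s).Nonempty} = 0 := by
  -- every such `w` lies on a ray from `p` through a point of `s`
  let F : V × ℝ → V := fun q => p + q.2 • (q.1 - p)
  have hF : LocallyLipschitz F := (by fun_prop : ContDiff ℝ 1 F).locallyLipschitz
  refine measure_mono_null ?_ (hF.hausdorffMeasure_image_eq_zero (by linarith)
    (Measure.hausdorffMeasure_prod_univ_eq_zero hd hs))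
  rintro w ⟨e, he, hes⟩
  obtain ⟨θ, -, rfl⟩ := (segment_eq_image' ℝ p w).subset he
  have hθ : θ ≠ 0 := by
    rintro rfl
    simp_all
  refine ⟨(p + θ • (w - p), θ⁻¹), ⟨hes, mem_univ _⟩, ?_⟩
  simp [F, smul_smul, inv_mul_cancel₀ hθ]

theorem dense_compl_of_hausdorffMeasure_eq_zero {d : ℝ} (hd : d ≤ finrank ℝ V) {s : Set V}
    (hs : μH[d] s = 0) : Dense sᶜ :=
  interior_eq_empty_iff_dense_compl.1 <| Measure.interior_eq_empty_of_null <|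
    nonpos_iff_eq_zero.1 (hs ▸ Measure.hausdorffMeasure_mono hd s)

theorem Convex.isPathConnected_diff_of_hausdorffMeasure_eq_zero {U s : Set V} (hU : Convex ℝ U)
    (hUo : IsOpen U) (hUne : U.Nonempty) (hV : 2 ≤ finrank ℝ V)
    (hs : μH[(finrank ℝ V : ℝ) - 1] s = 0) : IsPathConnected (U \ s) := by
  have hd : (1 : ℝ) ≤ finrank ℝ V - 1 := by
    have : (2 : ℝ) ≤ finrank ℝ V := mod_cast hV
    linarith
  have hcone (a : V) (ha : a ∉ s) :
      μH[(finrank ℝ V : ℝ)] {x | (segment ℝ a x ∩ s).Nonempty} = 0 := by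
    simpa using hausdorffMeasure_segment_inter_nonempty_eq_zero hd hs ha
  have hjoin (a : V) (ha : a ∈ U \ s) (w : V) (hw : w ∈ U)
      (haw : w ∉ {x | (segment ℝ a x ∩ s).Nonempty}) : JoinedIn (U \ s) a w :=
    JoinedIn.of_segment_subset fun z hz =>
      ⟨hU.segment_subset ha.1 hw hz, fun hzs => haw ⟨z, hz, hzs⟩⟩
  refine isPathConnected_iff.2 ⟨?_, fun a ha b hb => ?_⟩
  · exact (dense_compl_of_hausdorffMeasure_eq_zero (by linarith) hs).inter_open_nonempty U hUo hUne
  obtain ⟨w, hwU, hw⟩ := (dense_compl_of_hausdorffMeasure_eq_zero le_rfl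
    (measure_union_null (hcone a ha.2) (hcone b hb.2))).inter_open_nonempty U hUo hUne
  rw [mem_compl_iff, mem_union, not_or] at hw
  exact (hjoin a ha w hwU hw.1).trans (hjoin b hb w hwU hw.2).symm

end FiniteDimensional

theorem connected_of_hausdorff_null_removed_general (d : ℕ) (hd : 2 ≤ d)
    (Ω E : Set (Fin d → ℝ)) (hΩ : IsOpen Ω) (hconn : IsConnected Ω)
    (hE : μH[(d : ℝ) - 1] E = 0) :
    IsConnected (Ω \ E) := by
  have hfin : finrank ℝ (Fin d → ℝ) = d := finrank_fin_fun ℝ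
  have hclosure : Ω ⊆ closure (Ω \ E) := by
    rw [sdiff_eq]
    exact (dense_compl_of_hausdorffMeasure_eq_zero (by simp) hE).open_subset_closure_inter hΩ
  refine ⟨closure_nonempty_iff.1 (hconn.nonempty.mono hclosure),
    hconn.isPreconnected.of_subset_closure_of_locally sdiff_subset hclosure fun x hx => ?_⟩
  obtain ⟨ε, hε, hεΩ⟩ := Metric.isOpen_iff.1 hΩ x hx
  refine ⟨ball x ε, isOpen_ball, mem_ball_self hε, ?_⟩
  rw [← inter_sdiff_assoc, inter_eq_left.2 hεΩ]
  exact ((convex_ball x ε).isPathConnected_diff_of_hausdorffMeasure_eq_zero isOpen_ball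
    (nonempty_ball.2 hε) (by rwa [hfin]) (by rwa [hfin])).isConnected.isPreconnected

/-- Let `Ω ⊆ ℝ^d` (`d ≥ 2`) be a connected open set and let `E ⊆ Ω` be closed in `Ω`
with `H^{d-1}(E) = 0`.  Then `Ω \ E` is connected. -/
theorem connected_of_hausdorff_null_removed (d : ℕ) (hd : 2 ≤ d)
    (Ω E : Set (Fin d → ℝ)) (hΩ : IsOpen Ω) (hconn : IsConnected Ω)
    (hEΩ : E ⊆ Ω) (hEclosed : IsOpen (Ω \ E))
    (hE : μH[(d : ℝ) - 1] E = 0) :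
    IsConnected (Ω \ E) :=
  connected_of_hausdorff_null_removed_general d hd Ω E hΩ hconn hE
end

section
/- Let J and K be closed subsets of the unit disc Δ ⊆ C with H^1(J) = H^1(K) = 0, and set E = (J × Δ) ∩ (Δ × K) = J × K ⊆ Δ². Then E is removable for holomorphic functions: every f holomorphic on Δ² \ E extends holomorphically to Δ². -/
/-!
Fix `p = (z₀, w₀) ∈ Δ²`. Since `‖·‖` is `1`-Lipschitz, the radii of the circles meeting `K`
form an `H¹`-null, hence Lebesgue-null, set, so some circle `|ζ| = r` with `|w₀| < r < 1`
misses `K`. Then `Δ × {|ζ| = r}` lies in the domain of `f`, and the Cauchy integral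
`(2πi)⁻¹ ∮_{|ζ| = r} f(z, ζ) / (ζ - w) dζ` is holomorphic in `(z, w)` on `Δ × {|w| < r}`
(differentiate under the integral sign). For `z ∉ J` the whole slice `{z} × Δ` lies in the
domain of `f`, so by the one-variable Cauchy formula this integral equals `f(z, w)`.
As `H¹(J) = 0`, `J` has empty interior, so `(Δ \ J) × Δ` is dense in `Δ²`: the local
extensions agree on overlaps, glue to a holomorphic `F` on `Δ²`, and `F = f` off `J × K` by
continuity.
-/

open MeasureTheory Set Metric Filter Topology Complex ContinuousLinearMap

theorem dense_compl_of_hausdorffMeasure_one_eq_zero {E : Type*} [NormedAddCommGroup E]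
    [NormedSpace ℝ E] [MeasurableSpace E] [BorelSpace E] [Nontrivial E] {J : Set E}
    (hJ : μH[1] J = 0) : Dense Jᶜ := by
  rw [← interior_eq_empty_iff_dense_compl, eq_empty_iff_forall_notMem]
  intro z hz
  obtain ⟨ε, hε, hball⟩ := Metric.isOpen_iff.1 isOpen_interior z hz
  obtain ⟨y, hy⟩ := (NormedSpace.sphere_nonempty (x := z)).2 (half_pos hε).le
  have hseg : segment ℝ z y ⊆ J :=
    ((convex_ball z ε).segment_subset (mem_ball_self hε)
      (sphere_subset_ball (half_lt_self hε) hy)).trans (hball.trans interior_subset)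
  have hzy := measure_mono_null hseg hJ
  rw [hausdorffMeasure_segment, edist_eq_zero] at hzy
  rw [← hzy, mem_sphere, dist_self] at hy
  linarith

theorem exists_sphere_disjoint_of_hausdorffMeasure_one_eq_zero {X : Type*} [MetricSpace X]
    [MeasurableSpace X] [BorelSpace X] {K : Set X} (hK : μH[1] K = 0) (c : X) {a b : ℝ}
    (hab : a < b) : ∃ r ∈ Ioo a b, Disjoint (sphere c r) K := by
  have hnull : volume ((dist · c) '' K) = 0 := by
    have := (LipschitzWith.dist_left c).hausdorffMeasure_image_le zero_le_one K
    rwa [hK, mul_zero, nonpos_iff_eq_zero, hausdorffMeasure_real] at this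
  have hIoo : volume (Ioo a b) ≠ 0 := by simpa using hab
  obtain ⟨r, hr, hrK⟩ := not_subset.1 fun h => hIoo (measure_mono_null h hnull)
  exact ⟨r, hr, disjoint_left.2 fun x hx hxK => hrK ⟨x, hxK, hx⟩⟩

theorem tendstoLocallyUniformlyOn_of_continuousOn_prod {α β E : Type*} [TopologicalSpace α]
    [TopologicalSpace β] [LocallyCompactSpace β] [UniformSpace E] {f : α → β → E} {s : Set α}
    {t : Set β} (ht : IsOpen t) (hf : ContinuousOn (Function.uncurry f) (s ×ˢ t)) {a : α}
    (ha : a ∈ s) : TendstoLocallyUniformlyOn f (f a) (𝓝[s] a) t := by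
  rw [tendstoLocallyUniformlyOn_iff_forall_isCompact ht]
  intro k hkt hk u hu
  obtain ⟨v, hv, hvu⟩ := hk.mem_uniformity_of_prod (hf.mono (prod_mono_right hkt)) ha
    (tendsto_swap_uniformity hu)
  exact eventually_of_mem hv hvu

theorem hasFDerivAt_circleIntegral_of_continuousOn {H E : Type*} [NormedAddCommGroup H]
    [NormedSpace ℂ H] [NormedAddCommGroup E] [NormedSpace ℂ E] {g : H → ℂ → E}
    {g' : H → ℂ → H →L[ℂ] E} {V : Set H} {c : ℂ} {R : ℝ} (hV : IsOpen V)
    (hg : ContinuousOn (Function.uncurry g) (V ×ˢ sphere c |R|))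
    (hg' : ContinuousOn (Function.uncurry g') (V ×ˢ sphere c |R|))
    (hderiv : ∀ p ∈ V, ∀ ζ ∈ sphere c |R|, HasFDerivAt (g · ζ) (g' p ζ) p) {p₀ : H}
    (hp₀ : p₀ ∈ V) :
    HasFDerivAt (fun p => ∮ ζ in C(c, R), g p ζ) (∮ ζ in C(c, R), g' p₀ ζ) p₀ := by
  have hcircle : Continuous (fun θ => circleMap 0 R θ * I) := by fun_prop
  have hslice : ∀ p ∈ V, Continuous fun θ => g p (circleMap c R θ) := fun p hp =>
    hg.comp_continuous (continuous_const.prodMk (continuous_circleMap c R))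
      fun θ => ⟨hp, circleMap_mem_sphere' c R θ⟩
  have hslice' : Continuous fun θ => g' p₀ (circleMap c R θ) :=
    hg'.comp_continuous (continuous_const.prodMk (continuous_circleMap c R))
      fun θ => ⟨hp₀, circleMap_mem_sphere' c R θ⟩
  obtain ⟨M, hM⟩ := (isCompact_sphere c |R|).exists_bound_of_continuousOn
    (hg'.comp (continuousOn_const.prodMk continuousOn_id) fun ζ hζ => ⟨hp₀, hζ⟩)
  obtain ⟨v, hv, hclose⟩ := (isCompact_sphere c |R|).mem_uniformity_of_prod hg' hp₀
    (dist_mem_uniformity one_pos)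
  rw [hV.nhdsWithin_eq hp₀] at hv
  simp only [circleIntegral, deriv_circleMap]
  refine intervalIntegral.hasFDerivAt_integral_of_dominated_of_fderiv_le
    (F := fun p θ => (circleMap 0 R θ * I) • g p (circleMap c R θ))
    (F' := fun p θ => (circleMap 0 R θ * I) • g' p (circleMap c R θ))
    (bound := fun _ => |R| * (M + 1)) (inter_mem hv (hV.mem_nhds hp₀)) ?_
    ((hcircle.fun_smul (hslice p₀ hp₀)).intervalIntegrable _ _)
    (hcircle.fun_smul hslice').aestronglyMeasurable ?_ intervalIntegrable_const ?_
  · filter_upwards [hV.mem_nhds hp₀] with p hp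
    exact (hcircle.fun_smul (hslice p hp)).aestronglyMeasurable
  · refine ae_of_all _ fun θ _ p hp => ?_
    have hζ := circleMap_mem_sphere' c R θ
    have hdist : ‖g' p (circleMap c R θ) - g' p₀ (circleMap c R θ)‖ < 1 :=
      dist_eq_norm (g' p _) _ ▸ hclose p hp.1 _ hζ
    have hM' : ‖g' p₀ (circleMap c R θ)‖ ≤ M := hM _ hζ
    rw [norm_smul, norm_mul, norm_circleMap_zero, norm_I, mul_one]
    gcongr
    linarith [norm_le_insert' (g' p (circleMap c R θ)) (g' p₀ (circleMap c R θ))]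
  · exact ae_of_all _ fun θ _ p hp =>
      (hderiv p hp.2 _ (circleMap_mem_sphere' c R θ)).const_smul _

section Slices

variable {E : Type*} [NormedAddCommGroup E] [NormedSpace ℂ E] {f : ℂ × ℂ → E}
  {Ω : Set (ℂ × ℂ)}

theorem differentiableAt_slice_left (hΩ : IsOpen Ω) (hf : DifferentiableOn ℂ f Ω) {x y : ℂ}
    (h : (x, y) ∈ Ω) : DifferentiableAt ℂ (fun x' => f (x', y)) x :=
  (hf.differentiableAt (hΩ.mem_nhds h)).comp x
    (differentiableAt_id.prodMk (differentiableAt_const y))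

theorem differentiableAt_slice_right (hΩ : IsOpen Ω) (hf : DifferentiableOn ℂ f Ω) {x y : ℂ}
    (h : (x, y) ∈ Ω) : DifferentiableAt ℂ (fun y' => f (x, y')) y :=
  (hf.differentiableAt (hΩ.mem_nhds h)).comp y
    ((differentiableAt_const x).prodMk differentiableAt_id)

theorem continuousOn_deriv_slice_left [CompleteSpace E] (hΩ : IsOpen Ω)
    (hf : DifferentiableOn ℂ f Ω) :
    ContinuousOn (fun q : ℂ × ℂ => deriv (fun x => f (x, q.2)) q.1) Ω := by
  rintro ⟨z, w⟩ hq
  obtain ⟨ρ, hρ, hball⟩ := Metric.isOpen_iff.1 hΩ _ hq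
  rw [← ball_prod_same] at hball
  set F : ℂ → ℂ → E := fun ζ x => f (x, ζ)
  have hF : ∀ ζ ∈ ball w ρ, DifferentiableOn ℂ (F ζ) (ball z ρ) := fun ζ hζ x hx =>
    (differentiableAt_slice_left hΩ hf (hball ⟨hx, hζ⟩)).differentiableWithinAt
  have hFcont : ContinuousOn (Function.uncurry F) (ball w ρ ×ˢ ball z ρ) :=
    hf.continuousOn.comp continuous_swap.continuousOn fun q hq => hball ⟨hq.2, hq.1⟩
  -- Weierstrass: locally uniform convergence of holomorphic functions passes to derivatives.
  have hderiv := (tendstoLocallyUniformlyOn_of_continuousOn_prod isOpen_ball hFcont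
    (mem_ball_self hρ)).deriv (eventually_mem_nhdsWithin.mono hF) isOpen_ball
  rw [isOpen_ball.nhdsWithin_eq (mem_ball_self hρ)] at hderiv
  have hlim : TendstoLocallyUniformlyOn (fun q : ℂ × ℂ => deriv (F q.2)) (deriv (F w))
      (𝓝 (z, w)) (ball z ρ) := fun u hu x hx =>
    (hderiv u hu x hx).imp fun _ ht => ⟨ht.1, (continuousAt_snd (p := (z, w))).eventually ht.2⟩
  refine ContinuousAt.continuousWithinAt (hlim.tendsto_comp (g := Prod.fst)
    (((hF w (mem_ball_self hρ)).deriv isOpen_ball).continuousOn _ (mem_ball_self hρ))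
    (mem_ball_self hρ) ?_)
  rw [isOpen_ball.nhdsWithin_eq (mem_ball_self hρ)]
  exact continuousAt_fst

end Slices

section CauchyIntegralSnd

variable {E : Type*} [NormedAddCommGroup E] [NormedSpace ℂ E] {f : ℂ × ℂ → E}
  {Ω : Set (ℂ × ℂ)}

noncomputable def cauchyIntegralSnd (f : ℂ × ℂ → E) (c : ℂ) (R : ℝ) (p : ℂ × ℂ) : E :=
  (2 * Real.pi * I : ℂ)⁻¹ • ∮ ζ in C(c, R), (ζ - p.2)⁻¹ • f (p.1, ζ)

theorem cauchyIntegralSnd_eq [CompleteSpace E] {c : ℂ} {R : ℝ} {p : ℂ × ℂ}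
    (hf : DifferentiableOn ℂ (fun ζ => f (p.1, ζ)) (closedBall c R)) (hp : p.2 ∈ ball c R) :
    cauchyIntegralSnd f c R p = f p := by
  rw [cauchyIntegralSnd, hf.circleIntegral_sub_inv_smul hp, smul_smul,
    inv_mul_cancel₀ two_pi_I_ne_zero, one_smul]

theorem hasFDerivAt_cauchyIntegralSnd_integrand (hΩ : IsOpen Ω) (hf : DifferentiableOn ℂ f Ω)
    {p : ℂ × ℂ} {ζ : ℂ} (hpζ : (p.1, ζ) ∈ Ω) (hne : ζ - p.2 ≠ 0) :
    HasFDerivAt (fun q : ℂ × ℂ => (ζ - q.2)⁻¹ • f (q.1, ζ))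
      ((ζ - p.2)⁻¹ • (fst ℂ ℂ ℂ).smulRight (deriv (fun x => f (x, ζ)) p.1)
        + (snd ℂ ℂ ℂ).smulRight ((ζ - p.2)⁻¹ ^ 2 • f (p.1, ζ))) p := by
  have hinv : HasFDerivAt (fun q : ℂ × ℂ => (ζ - q.2)⁻¹)
      ((snd ℂ ℂ ℂ).smulRight ((ζ - p.2) ^ 2)⁻¹) p := by
    refine ((hasDerivAt_inv hne).comp_hasFDerivAt p
      ((hasFDerivAt_snd (p := p)).const_sub ζ)).congr_fderiv ?_
    ext <;> simp
  have hslice : HasFDerivAt (fun q : ℂ × ℂ => f (q.1, ζ))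
      ((fst ℂ ℂ ℂ).smulRight (deriv (fun x => f (x, ζ)) p.1)) p := by
    refine ((differentiableAt_slice_left hΩ hf hpζ).hasDerivAt.hasFDerivAt.comp p
      (hasFDerivAt_fst (p := p))).congr_fderiv ?_
    ext <;> simp
  refine (hinv.smul hslice).congr_fderiv ?_
  ext <;> simp

theorem differentiableOn_cauchyIntegralSnd [CompleteSpace E] (hΩ : IsOpen Ω) (hf : DifferentiableOn ℂ f Ω)
    {U : Set ℂ} (hU : IsOpen U) {c : ℂ} {R : ℝ} (hUΩ : U ×ˢ sphere c |R| ⊆ Ω) :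
    DifferentiableOn ℂ (cauchyIntegralSnd f c R) (U ×ˢ ball c |R|) := by
  set V := U ×ˢ ball c |R|
  have hmaps : MapsTo (fun x : (ℂ × ℂ) × ℂ => (x.1.1, x.2)) (V ×ˢ sphere c |R|) Ω :=
    fun x hx => hUΩ ⟨hx.1.1, hx.2⟩
  have hne : ∀ x ∈ V ×ˢ sphere c |R|, x.2 - x.1.2 ≠ 0 := fun x hx =>
    sub_ne_zero.2 (sphere_disjoint_ball.ne_of_mem hx.2 hx.1.2)
  have hinv : ContinuousOn (fun x : (ℂ × ℂ) × ℂ => (x.2 - x.1.2)⁻¹) (V ×ˢ sphere c |R|) :=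
    (continuousOn_snd.sub (continuous_snd.comp continuous_fst).continuousOn).inv₀ hne
  have hg : ContinuousOn (fun x : (ℂ × ℂ) × ℂ => (x.2 - x.1.2)⁻¹ • f (x.1.1, x.2))
      (V ×ˢ sphere c |R|) :=
    hinv.smul (hf.continuousOn.comp (by fun_prop) hmaps)
  have hg' : ContinuousOn (fun x : (ℂ × ℂ) × ℂ =>
      (x.2 - x.1.2)⁻¹ • (fst ℂ ℂ ℂ).smulRight (deriv (fun y => f (y, x.2)) x.1.1)
        + (snd ℂ ℂ ℂ).smulRight ((x.2 - x.1.2)⁻¹ ^ 2 • f (x.1.1, x.2))) (V ×ˢ sphere c |R|) :=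
    (hinv.smul ((smulRightL ℂ (ℂ × ℂ) E (fst ℂ ℂ ℂ)).continuous.comp_continuousOn
      ((continuousOn_deriv_slice_left hΩ hf).comp (by fun_prop) hmaps))).add
      ((smulRightL ℂ (ℂ × ℂ) E (snd ℂ ℂ ℂ)).continuous.comp_continuousOn
        ((hinv.pow 2).smul (hf.continuousOn.comp (by fun_prop) hmaps)))
  intro p hp
  exact ((hasFDerivAt_circleIntegral_of_continuousOn (hU.prod isOpen_ball) hg hg'
    (fun p hp ζ hζ => hasFDerivAt_cauchyIntegralSnd_integrand hΩ hf (hUΩ ⟨hp.1, hζ⟩)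
      (hne (p, ζ) ⟨hp, hζ⟩)) hp).differentiableAt.const_smul _).differentiableWithinAt

theorem exists_local_extension_of_hausdorffMeasure_one_eq_zero [CompleteSpace E] {U J K : Set ℂ} {c : ℂ} {R : ℝ}
    (hΩ : IsOpen ((U ×ˢ ball c R) \ J ×ˢ K)) (hU : IsOpen U) (hK : μH[1] K = 0)
    (hf : DifferentiableOn ℂ f ((U ×ˢ ball c R) \ J ×ˢ K)) {p : ℂ × ℂ}
    (hp : p ∈ U ×ˢ ball c R) :
    ∃ V G, IsOpen V ∧ p ∈ V ∧ V ⊆ U ×ˢ ball c R ∧ DifferentiableOn ℂ G V ∧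
      EqOn G f (V ∩ (U \ J) ×ˢ ball c R) := by
  obtain ⟨r, ⟨hpr, hrR⟩, hrK⟩ :=
    exists_sphere_disjoint_of_hausdorffMeasure_one_eq_zero hK c (mem_ball.1 hp.2)
  have hr : |r| = r := abs_of_pos (dist_nonneg.trans_lt hpr)
  refine ⟨U ×ˢ ball c r, cauchyIntegralSnd f c r, hU.prod isOpen_ball, ⟨hp.1, hpr⟩,
    prod_mono_right (ball_subset_ball hrR.le), ?_, ?_⟩
  · have hsphere : U ×ˢ sphere c |r| ⊆ (U ×ˢ ball c R) \ J ×ˢ K := by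
      rintro ⟨z, ζ⟩ ⟨hz, hζ⟩
      rw [hr] at hζ
      exact ⟨⟨hz, sphere_subset_ball hrR hζ⟩, fun h => disjoint_left.1 hrK hζ h.2⟩
    simpa only [hr] using differentiableOn_cauchyIntegralSnd hΩ hf hU hsphere
  · rintro q ⟨⟨-, hq2⟩, ⟨hq1, hqJ⟩, -⟩
    exact cauchyIntegralSnd_eq (fun ζ hζ => (differentiableAt_slice_right (x := q.1) (y := ζ)
      hΩ hf ⟨⟨hq1, closedBall_subset_ball hrR hζ⟩, fun h => hqJ h.1⟩).differentiableWithinAt) hq2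

end CauchyIntegralSnd

theorem exists_differentiableOn_of_local_extensions {X E : Type*} [NormedAddCommGroup X]
    [NormedSpace ℂ X] [NormedAddCommGroup E] [NormedSpace ℂ E] {U D : Set X} {f : X → E}
    (hD : U ⊆ closure D)
    (hloc : ∀ p ∈ U, ∃ V G, IsOpen V ∧ p ∈ V ∧ V ⊆ U ∧ DifferentiableOn ℂ G V ∧
      EqOn G f (V ∩ D)) :
    ∃ F : X → E, DifferentiableOn ℂ F U ∧ EqOn F f (U ∩ D) := by
  choose! V G hV hpV hVU hG hGf using hloc
  have hagree : ∀ p ∈ U, ∀ q ∈ U, EqOn (G p) (G q) (V p ∩ V q) := fun p hp q hq =>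
    EqOn.of_subset_closure (s := V p ∩ V q ∩ D)
      (fun x hx => (hGf p hp ⟨hx.1.1, hx.2⟩).trans (hGf q hq ⟨hx.1.2, hx.2⟩).symm)
      ((hG p hp).continuousOn.mono inter_subset_left)
      ((hG q hq).continuousOn.mono inter_subset_right) inter_subset_left
      fun x hx => ((hV p hp).inter (hV q hq)).inter_closure ⟨hx, hD (hVU p hp hx.1)⟩
  refine ⟨fun p => G p p, fun p hp => ?_, fun p hp => hGf p hp.1 ⟨hpV p hp.1, hp.2⟩⟩
  have hnhds : V p ∈ 𝓝 p := (hV p hp).mem_nhds (hpV p hp)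
  have hev : (fun q => G q q) =ᶠ[𝓝 p] G p := eventually_of_mem hnhds fun q hq =>
    hagree q (hVU p hp hq) p hp ⟨hpV q (hVU p hp hq), hq⟩
  exact (((hG p hp).differentiableAt hnhds).congr_of_eventuallyEq hev).differentiableWithinAt

theorem product_removable_general (J K : Set ℂ)
    (hJclosed : IsOpen (ball (0 : ℂ) 1 \ J)) (hKclosed : IsOpen (ball (0 : ℂ) 1 \ K))
    (hJH : μH[1] J = 0) (hKH : μH[1] K = 0)
    (f : ℂ × ℂ → ℂ)
    (hf : DifferentiableOn ℂ f ((ball (0 : ℂ) 1 ×ˢ ball (0 : ℂ) 1) \ J ×ˢ K)) :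
    ∃ F : ℂ × ℂ → ℂ, DifferentiableOn ℂ F (ball (0 : ℂ) 1 ×ˢ ball (0 : ℂ) 1) ∧
      EqOn F f ((ball (0 : ℂ) 1 ×ˢ ball (0 : ℂ) 1) \ J ×ˢ K) := by
  set Δ := ball (0 : ℂ) 1
  have hΩ : IsOpen ((Δ ×ˢ Δ) \ J ×ˢ K) := by
    rw [prod_sdiff_prod]
    exact (isOpen_ball.prod hKclosed).union (hJclosed.prod isOpen_ball)
  have hD : Δ ×ˢ Δ ⊆ closure ((Δ \ J) ×ˢ Δ) := by
    rw [closure_prod_eq]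
    exact prod_mono ((dense_compl_of_hausdorffMeasure_one_eq_zero hJH).open_subset_closure_inter
      isOpen_ball) subset_closure
  have hDΩ : (Δ \ J) ×ˢ Δ ⊆ (Δ ×ˢ Δ) \ J ×ˢ K := fun p hp =>
    ⟨⟨hp.1.1, hp.2⟩, fun h => hp.1.2 h.1⟩
  obtain ⟨F, hF, hFf⟩ := exists_differentiableOn_of_local_extensions hD fun p hp =>
    exists_local_extension_of_hausdorffMeasure_one_eq_zero hΩ isOpen_ball hKH hf hp
  exact ⟨F, hF, EqOn.of_subset_closure (fun p hp => hFf ⟨(hDΩ hp).1, hp⟩)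
    (hF.continuousOn.mono sdiff_subset) hf.continuousOn hDΩ (sdiff_subset.trans hD)⟩

/-- Let `J, K` be closed subsets of the unit disc `Δ ⊆ ℂ` with `H^1(J) = H^1(K) = 0`
and let `E = (J × Δ) ∩ (Δ × K) = J × K ⊆ Δ²`.  Then `E` is removable for holomorphic
functions: every `f` holomorphic on `Δ² \ E` extends holomorphically to `Δ²`. -/
theorem product_removable (J K : Set ℂ)
    (hJ : J ⊆ ball (0 : ℂ) 1) (hK : K ⊆ ball (0 : ℂ) 1)
    (hJclosed : IsOpen (ball (0 : ℂ) 1 \ J)) (hKclosed : IsOpen (ball (0 : ℂ) 1 \ K))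
    (hJH : μH[1] J = 0) (hKH : μH[1] K = 0)
    (f : ℂ × ℂ → ℂ)
    (hf : DifferentiableOn ℂ f ((ball (0 : ℂ) 1 ×ˢ ball (0 : ℂ) 1) \ J ×ˢ K)) :
    ∃ F : ℂ × ℂ → ℂ, DifferentiableOn ℂ F (ball (0 : ℂ) 1 ×ˢ ball (0 : ℂ) 1) ∧
      EqOn F f ((ball (0 : ℂ) 1 ×ˢ ball (0 : ℂ) 1) \ J ×ˢ K) :=
  product_removable_general J K hJclosed hKclosed hJH hKH f hf
end
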